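/- Let R = k{x₁,…,x_m; Q_R, ⪯_R} and S = k{y₁,…,yₙ; Q_S, ⪯_S} be PBW algebras over a field k, with Q_R = {xⱼxᵢ − qⱼᵢxᵢxⱼ − pⱼᵢ : 1 ≤ i < j ≤ m} and Q_S = {yⱼyᵢ − q′ⱼᵢyᵢyⱼ − p′ⱼᵢ : 1 ≤ i < j ≤ n}. Let ⪯ be either of the two elimination orders on ℕ^{m+n} = ℕ^m×ℕⁿ built from ⪯_R and ⪯_S, namely (α,β) ≺ (γ,δ) iff α ≺_R γ or (α = γ and β ≺_S δ), or (α,β) ≺ (γ,δ) iff β ≺_S δ or (β = δ and α ≺_R γ). Then R ⊗_k S is the PBW algebra k{x₁⊗1,…,x_m⊗1, 1⊗y₁,…,1⊗yₙ; Q, ⪯}, where Q = {(xⱼ⊗1)(xᵢ⊗1) − qⱼᵢ(xᵢ⊗1)(xⱼ⊗1) − pⱼᵢ⊗1 : 1 ≤ i < j ≤ m} ∪ {(1⊗yⱼ)(xᵢ⊗1) − (xᵢ⊗1)(1⊗yⱼ) : 1 ≤ i ≤ m, 1 ≤ j ≤ n} ∪ {(1⊗yⱼ)(1⊗yᵢ)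 − q′ⱼᵢ(1⊗yᵢ)(1⊗yⱼ) − 1⊗p′ⱼᵢ : 1 ≤ i < j ≤ n}. Explicitly: Q is a set of quantum relations in the listed m+n generators bounded by the admissible order ⪯; the canonical k-algebra homomorphism from the quotient of the free algebra on these m+n generators by the two-sided ideal generated by Q to R ⊗_k S is an isomorphism; and the standard monomials (x₁⊗1)^{α₁}⋯(x_m⊗1)^{α_m}(1⊗y₁)^{β₁}⋯(1⊗yₙ)^{βₙ} = x^α ⊗ y^β form a k-basis of R ⊗_k S. -/

import Mathlib

open TensorProduct MulOpposite

set_option synthInstance.maxHeartbeats 1000000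
set_option maxHeartbeats 1000000

noncomputable section

/-- An admissible order on a commutative monoid of exponents: a total order for which `0`
is smallest and which is compatible with addition. -/
def IsAdmissible {E : Type*} [AddCommMonoid E] (le : E → E → Prop) : Prop :=
  (∀ a b, le a b ∨ le b a) ∧
  (∀ a b, le a b → le b a → a = b) ∧
  (∀ a b c, le a b → le b c → le a c) ∧
  (∀ a, le 0 a) ∧
  (∀ a b c, le a b → le (a + c) (b + c))

/-- The strict part of an order. -/
def ltOf {E : Type*} (le : E → E → Prop) (a b : E) : Prop := le a b ∧ a ≠ b

/-- `α^op`: the reversal of a multi-exponent. -/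
def expRev {n : ℕ} (α : Fin n → ℕ) : Fin n → ℕ := fun i => α i.rev

/-- The order `⪯^op` on exponents: `α ⪯^op β ↔ α^op ⪯ β^op`. -/
def opOrd {n : ℕ} (le : (Fin n → ℕ) → (Fin n → ℕ) → Prop) :
    (Fin n → ℕ) → (Fin n → ℕ) → Prop := fun a b => le (expRev a) (expRev b)

/-- The up-component composition order `⪯^c` on `ℕⁿ × ℕⁿ`. -/
def upCompOrd {n : ℕ} (le : (Fin n → ℕ) → (Fin n → ℕ) → Prop) :
    ((Fin n → ℕ) × (Fin n → ℕ)) → ((Fin n → ℕ) × (Fin n → ℕ)) → Prop := fun a b =>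
  a = b ∨ ltOf le (a.1 + expRev a.2) (b.1 + expRev b.2) ∨
    (a.1 + expRev a.2 = b.1 + expRev b.2 ∧ ltOf le (expRev a.2) (expRev b.2))

/-- The down-component composition order `⪯_c` on `ℕⁿ × ℕⁿ`. -/
def downCompOrd {n : ℕ} (le : (Fin n → ℕ) → (Fin n → ℕ) → Prop) :
    ((Fin n → ℕ) × (Fin n → ℕ)) → ((Fin n → ℕ) × (Fin n → ℕ)) → Prop := fun a b =>
  a = b ∨ ltOf le (a.1 + expRev a.2) (b.1 + expRev b.2) ∨
    (a.1 + expRev a.2 = b.1 + expRev b.2 ∧ ltOf le a.1 b.1)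

/-- The elimination order `⪯*` on `ℕⁿ × ℕⁿ` built from `⪯` and `⪯^op`. -/
def elimUpOrd {n : ℕ} (le : (Fin n → ℕ) → (Fin n → ℕ) → Prop) :
    ((Fin n → ℕ) × (Fin n → ℕ)) → ((Fin n → ℕ) × (Fin n → ℕ)) → Prop := fun a b =>
  a = b ∨ ltOf le a.1 b.1 ∨ (a.1 = b.1 ∧ ltOf (opOrd le) a.2 b.2)

/-- The elimination order `⪯_*` on `ℕⁿ × ℕⁿ` built from `⪯` and `⪯^op`. -/
def elimDownOrd {n : ℕ} (le : (Fin n → ℕ) → (Fin n → ℕ) → Prop) :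
    ((Fin n → ℕ) × (Fin n → ℕ)) → ((Fin n → ℕ) × (Fin n → ℕ)) → Prop := fun a b =>
  a = b ∨ ltOf (opOrd le) a.2 b.2 ∨ (a.2 = b.2 ∧ ltOf le a.1 b.1)

/-- The strict TOP (term over position) order on `I × Fin m` built from a strict order on `I`. -/
def topLt {I : Type*} {m : ℕ} (lt : I → I → Prop) (a b : I × Fin m) : Prop :=
  lt a.1 b.1 ∨ (a.1 = b.1 ∧ b.2 < a.2)

/-- The strict POT (position over term) order on `I × Fin m` built from a strict order on `I`. -/
def potLt {I : Type*} {m : ℕ} (lt : I → I → Prop) (a b : I × Fin m) : Prop :=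
  b.2 < a.2 ∨ (a.2 = b.2 ∧ lt a.1 b.1)

/-- The standard monomial `x^α = x₁^{α₁} ⋯ xₙ^{αₙ}` (ordered product). -/
def stdMon {n : ℕ} {A : Type*} [Monoid A] (x : Fin n → A) (α : Fin n → ℕ) : A :=
  ((List.finRange n).map fun i => x i ^ α i).prod

/-- The quantum relation `xⱼxᵢ − qᵢⱼ xᵢxⱼ − pᵢⱼ` (for `i < j`) as an element of the free
algebra; here `pᵢⱼ` is recorded by its coefficients on standard monomials. -/
def quantumRel (k : Type*) [Field k] {n : ℕ} (q : Fin n → Fin n → k)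
    (p : Fin n → Fin n → ((Fin n → ℕ) →₀ k)) (i j : Fin n) : FreeAlgebra k (Fin n) :=
  FreeAlgebra.ι k j * FreeAlgebra.ι k i
    - q i j • (FreeAlgebra.ι k i * FreeAlgebra.ι k j)
    - (p i j).sum fun γ c => c • stdMon (FreeAlgebra.ι k) γ

/-- `R` is the PBW algebra `k{x₁,…,xₙ; Q, ⪯}`, where the relation for `i < j` reads
`xⱼxᵢ = qᵢⱼ xᵢxⱼ + pᵢⱼ`: the order is admissible, the `q`'s are nonzero, the tails `p` are
bounded by `⪯`, the canonical map from the free algebra is surjective with kernel the two-sided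
ideal generated by the relations, and the standard monomials form a `k`-basis. -/
def IsPBW (k : Type*) [Field k] {n : ℕ} (R : Type*) [Ring R] [Algebra k R]
    (x : Fin n → R) (q : Fin n → Fin n → k) (p : Fin n → Fin n → ((Fin n → ℕ) →₀ k))
    (le : (Fin n → ℕ) → (Fin n → ℕ) → Prop) : Prop :=
  IsAdmissible le ∧
  (∀ i j : Fin n, i < j → q i j ≠ 0) ∧
  (∀ i j : Fin n, i < j → ∀ γ ∈ (p i j).support,
      ltOf le γ (Pi.single i 1 + Pi.single j 1)) ∧
  Function.Surjective (FreeAlgebra.lift k x) ∧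
  (∀ a : FreeAlgebra k (Fin n),
      FreeAlgebra.lift k x a = 0 ↔
        a ∈ TwoSidedIdeal.span {y | ∃ i j : Fin n, i < j ∧ y = quantumRel k q p i j}) ∧
  LinearIndependent k (stdMon x) ∧
  Submodule.span k (Set.range (stdMon x)) = ⊤

section Env

variable {k R : Type*} [Field k] [Ring R] [Algebra k R]

/-- The left `R^env = R ⊗[k] Rᵐᵒᵖ`-module structure on `R`, given by
`(r ⊗ r') • f = r * f * r'`. -/
noncomputable instance (priority := 100) envModule : Module (R ⊗[k] Rᵐᵒᵖ) R :=
  TensorProduct.Algebra.module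

/-- The multiplication map `𝔪 : R^env → R`, `r ⊗ r' ↦ r r'`, as a morphism of left
`R^env`-modules. -/
noncomputable def mulE (k R : Type*) [Field k] [Ring R] [Algebra k R] :
    (R ⊗[k] Rᵐᵒᵖ) →ₗ[R ⊗[k] Rᵐᵒᵖ] R :=
  LinearMap.toSpanSingleton _ _ (1 : R)

/-- The map `𝔪^s : (R^env)^s → R^s` applying `𝔪` coordinatewise, as a morphism of left
`R^env`-modules. -/
noncomputable def mulS (k R : Type*) [Field k] [Ring R] [Algebra k R] (s : ℕ) :
    (Fin s → R ⊗[k] Rᵐᵒᵖ) →ₗ[R ⊗[k] Rᵐᵒᵖ] (Fin s → R) :=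
  LinearMap.pi fun i => (mulE k R).comp (LinearMap.proj i)

/-- `f ⊗ 1 := (f₁ ⊗ 1, …, f_s ⊗ 1)`. -/
def tensorOne (k : Type*) [Field k] {R : Type*} [Ring R] [Algebra k R] {s : ℕ}
    (f : Fin s → R) : Fin s → R ⊗[k] Rᵐᵒᵖ := fun i => f i ⊗ₜ[k] (1 : Rᵐᵒᵖ)

/-- `1 ⊗ f := (1 ⊗ f₁, …, 1 ⊗ f_s)`. -/
def oneTensor (k : Type*) [Field k] {R : Type*} [Ring R] [Algebra k R] {s : ℕ}
    (f : Fin s → R) : Fin s → R ⊗[k] Rᵐᵒᵖ := fun i => (1 : R) ⊗ₜ[k] op (f i)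

/-- The map `(h₁,…,h_m) ↦ Σᵢ hᵢ • wᵢ`, whose kernel is the (two-sided/left) syzygy module
of the family `w`. -/
noncomputable def syzMap (A : Type*) [Ring A] {M : Type*} [AddCommGroup M] [Module A M]
    {ι : Type*} [Fintype ι] (w : ι → M) : (ι → A) →ₗ[A] M where
  toFun h := ∑ l, h l • w l
  map_add' h h' := by simp [add_smul, Finset.sum_add_distrib]
  map_smul' a h := by simp [mul_smul, Finset.smul_sum]

end Env

/-- `e` is the exponent (leading index) of the nonzero element `h` of a free module of rank `m`
over an algebra with a standard-monomial basis `b` indexed by `I`, with respect to a strict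
order `lt` on `I × Fin m`: the coordinate of `h` at `e` is nonzero and every other index with
nonzero coordinate is smaller. -/
def IsExpOf {k R0 I : Type*} [Field k] [AddCommGroup R0] [Module k R0] {m : ℕ}
    (b : Module.Basis I k R0) (lt : I × Fin m → I × Fin m → Prop)
    (h : Fin m → R0) (e : I × Fin m) : Prop :=
  b.repr (h e.2) e.1 ≠ 0 ∧ ∀ β i, b.repr (h i) β ≠ 0 → (β, i) = e ∨ lt ((β, i)) e

/-- `G` is a Gröbner basis of the `A`-submodule `N` of the free module `(Fin m → R0)`:
`G ⊆ N \ {0}`, `G` generates `N` over `A`, and the leading exponent of every nonzero element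
of `N` is a translate (by some `δ`) of the leading exponent of some element of `G`, in the
same component.  Taking `A = R^env` acting on `R0 = R^env` gives left Gröbner bases, and
taking `A = R^env` acting on `R0 = R` gives two-sided Gröbner bases. -/
def IsGB {k R0 A I : Type*} [Field k] [AddCommGroup R0] [Module k R0] [Ring A] [Add I]
    {m : ℕ} [Module A (Fin m → R0)]
    (b : Module.Basis I k R0) (lt : I × Fin m → I × Fin m → Prop)
    (N : Submodule A (Fin m → R0)) (G : Set (Fin m → R0)) : Prop :=
  G ⊆ (N : Set (Fin m → R0)) \ {0} ∧ Submodule.span A G = N ∧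
  ∀ h, h ∈ N → h ≠ 0 →
    ∃ g ∈ G, ∃ γ δ i, IsExpOf b lt g (γ, i) ∧ IsExpOf b lt h (γ + δ, i)

end

section TensorPBW

variable {k : Type*} [Field k]

/-- The first `m` components of an exponent in `ℕ^{m+n}`. -/
def splitL {m n : ℕ} (α : Fin (m + n) → ℕ) : Fin m → ℕ := fun i => α (Fin.castAdd n i)

/-- The last `n` components of an exponent in `ℕ^{m+n}`. -/
def splitR {m n : ℕ} (α : Fin (m + n) → ℕ) : Fin n → ℕ := fun j => α (Fin.natAdd m j)

/-- The elimination order on `ℕ^{m+n}` giving priority to the first block. -/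
def elimOrdL {m n : ℕ} (leR : (Fin m → ℕ) → (Fin m → ℕ) → Prop)
    (leS : (Fin n → ℕ) → (Fin n → ℕ) → Prop) (α β : Fin (m + n) → ℕ) : Prop :=
  α = β ∨ ltOf leR (splitL α) (splitL β) ∨ (splitL α = splitL β ∧ ltOf leS (splitR α) (splitR β))

/-- The elimination order on `ℕ^{m+n}` giving priority to the second block. -/
def elimOrdR {m n : ℕ} (leR : (Fin m → ℕ) → (Fin m → ℕ) → Prop)
    (leS : (Fin n → ℕ) → (Fin n → ℕ) → Prop) (α β : Fin (m + n) → ℕ) : Prop :=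
  α = β ∨ ltOf leS (splitR α) (splitR β) ∨ (splitR α = splitR β ∧ ltOf leR (splitL α) (splitL β))

variable {R S : Type*} [Ring R] [Algebra k R] [Ring S] [Algebra k S] {m n : ℕ}

/-- The scalars of the quantum relations of `R ⊗[k] S`. -/
def qTens (qR : Fin m → Fin m → k) (qS : Fin n → Fin n → k) (i j : Fin (m + n)) : k :=
  if hi : (i : ℕ) < m then
    if hj : (j : ℕ) < m then qR ⟨i, hi⟩ ⟨j, hj⟩ else 1
  else
    if hj : (j : ℕ) < m then 1
    else qS ⟨(i : ℕ) - m, by have := i.isLt; omega⟩ ⟨(j : ℕ) - m, by have := j.isLt; omega⟩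

/-- The tails of the quantum relations of `R ⊗[k] S`. -/
noncomputable def pTens (pR : Fin m → Fin m → ((Fin m → ℕ) →₀ k))
    (pS : Fin n → Fin n → ((Fin n → ℕ) →₀ k)) (i j : Fin (m + n)) :
    (Fin (m + n) → ℕ) →₀ k :=
  if hi : (i : ℕ) < m then
    if hj : (j : ℕ) < m then
      Finsupp.mapDomain (fun α : Fin m → ℕ => Fin.append α 0) (pR ⟨i, hi⟩ ⟨j, hj⟩)
    else 0
  else
    if hj : (j : ℕ) < m then 0
    else Finsupp.mapDomain (fun β : Fin n → ℕ => Fin.append 0 β)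
      (pS ⟨(i : ℕ) - m, by have := i.isLt; omega⟩ ⟨(j : ℕ) - m, by have := j.isLt; omega⟩)

namespace TensorPBWAux
section Ord
variable {N : ℕ} {le : (Fin N → ℕ) → (Fin N → ℕ) → Prop}

theorem le_of_pointwise (h : IsAdmissible le) {a b : Fin N → ℕ} (hab : ∀ i, a i ≤ b i) :
    le a b := by
  have e : a + (b - a) = b := funext fun i => Nat.add_sub_cancel' (hab i)
  have h1 := h.2.2.2.2 0 (b - a) a (h.2.2.2.1 (b - a))
  rw [zero_add, add_comm] at h1
  rwa [e] at h1

theorem ltOf_add_right (h : IsAdmissible le) {a b : Fin N → ℕ} (c : Fin N → ℕ)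
    (hab : ltOf le a b) : ltOf le (a + c) (b + c) :=
  ⟨h.2.2.2.2 a b c hab.1, fun e => hab.2 (funext fun i => by
    have := congrFun e i
    simpa using Nat.add_right_cancel this)⟩

theorem ltOf_trans (h : IsAdmissible le) : ∀ {a b c : Fin N → ℕ},
    ltOf le a b → ltOf le b c → ltOf le a c := by
  intro a b c hab hbc
  refine ⟨h.2.2.1 a b c hab.1 hbc.1, fun e => ?_⟩
  subst e
  exact hbc.2 (h.2.1 b a hbc.1 hab.1)

theorem admissible_wf (h : IsAdmissible le) : WellFounded (ltOf le) := by
  haveI : IsTrans (Fin N → ℕ) (ltOf le) := ⟨fun _ _ _ => ltOf_trans h⟩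
  haveI : IsIrrefl (Fin N → ℕ) (ltOf le) := ⟨fun a ha => ha.2 rfl⟩
  haveI : IsStrictOrder (Fin N → ℕ) (ltOf le) := ⟨⟩
  rw [RelEmbedding.wellFounded_iff_isEmpty]
  constructor
  intro f
  have hpwo : (Set.univ : Set (Fin N → ℕ)).IsPWO :=
    Set.isPWO_of_wellQuasiOrderedLE _
  obtain ⟨p, q, hpq, hle2'⟩ := hpwo.exists_lt (f := fun n => f n) (fun n => Set.mem_univ _)
  have hstrict : ltOf le (f q) (f p) := f.map_rel_iff.mpr hpq
  have hle2 : le (f p) (f q) := le_of_pointwise h fun i => hle2' i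
  exact hstrict.2 (h.2.1 _ _ hstrict.1 hle2)

end Ord

variable {N : ℕ}

def sortedWord (γ : Fin N → ℕ) : List (Fin N) :=
  (List.finRange N).flatMap fun i => List.replicate (γ i) i

def expw (w : List (Fin N)) : Fin N → ℕ := fun i => w.count i

theorem expw_cons (a : Fin N) (t : List (Fin N)) :
    expw (a :: t) = Pi.single a 1 + expw t := by
  funext i
  rw [Pi.add_apply]
  show List.count i (a :: t) = _ + List.count i t
  rcases eq_or_ne i a with h | h
  · subst h; simp [List.count_cons, Nat.add_comm]
  · simp [List.count_cons, h, Ne.symm h, Pi.single_apply]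

theorem expw_append (u v : List (Fin N)) : expw (u ++ v) = expw u + expw v := by
  funext i; simp [expw, List.count_append]

theorem expw_perm {u v : List (Fin N)} (h : u.Perm v) : expw u = expw v :=
  funext fun i => h.count_eq i

theorem expw_sortedWord (γ : Fin N → ℕ) : expw (sortedWord γ) = γ := by
  funext i
  rw [show expw (sortedWord γ) i = List.count i (sortedWord γ) from rfl, sortedWord,
    List.count_flatMap, ← List.ofFn_eq_map, List.sum_ofFn]
  simp [Function.comp, List.count_replicate]

theorem sorted_sortedWord (γ : Fin N → ℕ) : (sortedWord γ).Pairwise (· ≤ ·) := by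
  unfold sortedWord
  rw [List.flatMap_def, List.pairwise_flatten]
  refine ⟨?_, ?_⟩
  · intro l hl
    simp only [List.mem_map] at hl
    obtain ⟨j, _, rfl⟩ := hl
    rw [List.pairwise_replicate]
    right; exact le_refl j
  · rw [List.pairwise_map]
    have : (List.finRange N).Pairwise (· < ·) := List.pairwise_lt_finRange N
    refine this.imp_of_mem ?_
    intro a b _ _ hab x hx y hy
    rw [List.eq_of_mem_replicate hx, List.eq_of_mem_replicate hy]
    exact le_of_lt hab

theorem eq_sortedWord_of_sorted {w : List (Fin N)} (h : w.Pairwise (· ≤ ·)) :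
    w = sortedWord (expw w) := by
  refine List.Perm.eq_of_pairwise' h (sorted_sortedWord _) ?_
  rw [List.perm_iff_count]
  intro a
  have := expw_sortedWord (expw w)
  exact (congrFun this a).symm

theorem stdMon_eq_wordProd {A : Type*} [Monoid A] (x : Fin N → A) (γ : Fin N → ℕ) :
    stdMon x γ = ((sortedWord γ).map x).prod := by
  unfold stdMon sortedWord
  rw [List.map_flatMap, List.flatMap_def, List.prod_flatten, List.map_map]
  congr 1
  apply List.map_congr_left
  intro i _
  simp [List.map_replicate, List.prod_replicate]

def invc : List (Fin N) → ℕ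
  | [] => 0
  | a :: t => t.countP (fun b => decide (b < a)) + invc t

theorem invc_cons (a : Fin N) (t : List (Fin N)) :
    invc (a :: t) = t.countP (fun b => decide (b < a)) + invc t := rfl

theorem invc_append_lt {s t : List (Fin N)} (hp : s.Perm t) (h : invc s < invc t) :
    ∀ u : List (Fin N), invc (u ++ s) < invc (u ++ t) := by
  intro u
  induction u with
  | nil => exact h
  | cons a u ih =>
    simp only [List.cons_append, invc_cons, List.countP_append]
    have : List.countP (fun b => decide (b < a)) s = List.countP (fun b => decide (b < a)) t :=
      hp.countP_eq _
    omega

theorem invc_swap {a b : Fin N} (hab : a < b) (v : List (Fin N)) :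
    invc (a :: b :: v) < invc (b :: a :: v) := by
  have h1 : (decide (b < a)) = false := decide_eq_false (not_lt_of_gt hab)
  have h2 : (decide (a < b)) = true := decide_eq_true hab
  simp only [invc_cons, List.countP_cons, h1, h2]
  simp
  omega

theorem exists_desc : ∀ {w : List (Fin N)}, ¬ w.Pairwise (· ≤ ·) →
    ∃ u b a v, w = u ++ b :: a :: v ∧ a < b := by
  intro w
  induction w with
  | nil => intro h; exact absurd List.Pairwise.nil h
  | cons c t ih =>
    intro h
    by_cases ht : t.Pairwise (· ≤ ·)
    · rw [List.pairwise_cons] at h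
      have h2 : ¬ ∀ b ∈ t, c ≤ b := fun hall => h ⟨hall, ht⟩
      push_neg at h2
      obtain ⟨b, hbt, hcb⟩ := h2
      obtain ⟨d, t', rfl⟩ : ∃ d t', t = d :: t' := by
        cases t with
        | nil => simp at hbt
        | cons d t' => exact ⟨d, t', rfl⟩
      refine ⟨[], c, d, t', rfl, ?_⟩
      rw [List.pairwise_cons] at ht
      rcases List.mem_cons.mp hbt with rfl | hb'
      · exact hcb
      · exact lt_of_le_of_lt (ht.1 b hb') (hcb)
    · obtain ⟨u, b, a, v, rfl, hab⟩ := ih ht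
      exact ⟨c :: u, b, a, v, rfl, hab⟩


section Generic
variable {k : Type*} [Field k] {N : ℕ}

/-- The set of quantum relations. -/
def relSet (q : Fin N → Fin N → k) (p : Fin N → Fin N → ((Fin N → ℕ) →₀ k)) :
    Set (FreeAlgebra k (Fin N)) :=
  {y | ∃ i j : Fin N, i < j ∧ y = quantumRel k q p i j}

/-- Standard monomials plus the ideal, as a `k`-submodule. -/
def Msub (q : Fin N → Fin N → k) (p : Fin N → Fin N → ((Fin N → ℕ) →₀ k)) :
    Submodule k (FreeAlgebra k (Fin N)) :=
  Submodule.span k (Set.range (stdMon (FreeAlgebra.ι k))) ⊔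
    Submodule.restrictScalars k (TwoSidedIdeal.asIdeal (TwoSidedIdeal.span (relSet q p)))

theorem sorted_of_invc_eq_zero : ∀ {w : List (Fin N)}, invc w = 0 → w.Pairwise (· ≤ ·) := by
  intro w
  induction w with
  | nil => intro _; exact List.Pairwise.nil
  | cons a t ih =>
    intro h
    rw [invc_cons] at h
    have h1 : t.countP (fun b => decide (b < a)) = 0 := by omega
    have h2 := ih (by omega)
    rw [List.pairwise_cons]
    refine ⟨fun b hb => ?_, h2⟩
    have h3 := List.countP_eq_zero.mp h1 b hb
    simp only [decide_eq_true_eq] at h3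
    exact not_lt.mp h3

theorem stdMon_monoidHom_map {A B : Type*} [Monoid A] [Monoid B] {F : Type*} [FunLike F A B]
    [MonoidHomClass F A B] (f : F) (x : Fin N → A) (γ : Fin N → ℕ) :
    f (stdMon x γ) = stdMon (fun i => f (x i)) γ := by
  unfold stdMon
  rw [map_list_prod, List.map_map]
  congr 1
  apply List.map_congr_left
  intro i _
  simp [map_pow]

theorem wordProd_mem {q : Fin N → Fin N → k} {p : Fin N → Fin N → ((Fin N → ℕ) →₀ k)}
    {le : (Fin N → ℕ) → (Fin N → ℕ) → Prop}
    (hle : IsAdmissible le)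
    (hp : ∀ i j : Fin N, i < j → ∀ γ ∈ (p i j).support,
      ltOf le γ (Pi.single i 1 + Pi.single j 1))
    (w : List (Fin N)) : ((w.map (FreeAlgebra.ι k)).prod) ∈ Msub q p := by
  suffices H : ∀ γ : Fin N → ℕ, ∀ w : List (Fin N), expw w = γ →
      ((w.map (FreeAlgebra.ι k)).prod) ∈ Msub q p from H _ w rfl
  intro γ0
  refine (admissible_wf hle).induction
    (C := fun δ => ∀ w, expw w = δ → ((w.map (FreeAlgebra.ι k)).prod) ∈ Msub q p) γ0 ?_
  intro δ IHo
  suffices H2 : ∀ K : ℕ, ∀ w, invc w < K → expw w = δ →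
      ((w.map (FreeAlgebra.ι k)).prod) ∈ Msub q p from
    fun w hw => H2 (invc w + 1) w (Nat.lt_succ_self _) hw
  intro K
  induction K with
  | zero => intro w hK; omega
  | succ K IHi =>
    intro w hK hw
    by_cases hs : w.Pairwise (· ≤ ·)
    · rw [eq_sortedWord_of_sorted hs, ← stdMon_eq_wordProd]
      exact Submodule.mem_sup_left (Submodule.subset_span ⟨expw w, rfl⟩)
    · obtain ⟨u, b, a, v, rfl, hab⟩ := exists_desc hs
      set tail := (p a b).sum (fun γ c => c • stdMon (FreeAlgebra.ι k) γ) with htail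
      set rel := quantumRel k q p a b with hreldef
      have hrel : FreeAlgebra.ι k b * FreeAlgebra.ι k a =
          q a b • (FreeAlgebra.ι k a * FreeAlgebra.ι k b) + tail + rel := by
        rw [hreldef, quantumRel, ← htail]
        abel
      have hw1 : (((u ++ b :: a :: v)).map (FreeAlgebra.ι k)).prod =
          (u.map (FreeAlgebra.ι k)).prod * ((FreeAlgebra.ι k b * FreeAlgebra.ι k a) *
            ((v.map (FreeAlgebra.ι k)).prod)) := by
        simp [List.map_append, List.prod_append, mul_assoc]
      rw [hw1, hrel]
      have e1 : (u.map (FreeAlgebra.ι k)).prod *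
            ((q a b • (FreeAlgebra.ι k a * FreeAlgebra.ι k b) + tail + rel) *
              (v.map (FreeAlgebra.ι k)).prod)
          = q a b • ((u.map (FreeAlgebra.ι k)).prod *
              (FreeAlgebra.ι k a * (FreeAlgebra.ι k b * (v.map (FreeAlgebra.ι k)).prod)))
            + (u.map (FreeAlgebra.ι k)).prod * tail * (v.map (FreeAlgebra.ι k)).prod
            + (u.map (FreeAlgebra.ι k)).prod * (rel * (v.map (FreeAlgebra.ι k)).prod) := by
        simp only [add_mul, mul_add, smul_mul_assoc, mul_smul_comm, mul_assoc]
      rw [e1]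
      refine Submodule.add_mem _ (Submodule.add_mem _ ?_ ?_) ?_
      · -- the swapped word
        apply Submodule.smul_mem
        have hswp : ((u ++ a :: b :: v).map (FreeAlgebra.ι k)).prod =
            (u.map (FreeAlgebra.ι k)).prod *
              (FreeAlgebra.ι k a * (FreeAlgebra.ι k b * (v.map (FreeAlgebra.ι k)).prod)) := by
          simp [List.map_append, List.prod_append, mul_assoc]
        rw [← hswp]
        have hperm : (a :: b :: v).Perm (b :: a :: v) := List.Perm.swap b a v
        refine IHi (u ++ a :: b :: v) ?_ ?_
        · have := invc_append_lt hperm (invc_swap hab v) u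
          omega
        · rw [expw_perm ((hperm).append_left u), hw]
      · -- the tail terms
        have e2 : (u.map (FreeAlgebra.ι k)).prod * tail * (v.map (FreeAlgebra.ι k)).prod =
            (p a b).sum fun γ c =>
              c • (((u ++ sortedWord γ ++ v).map (FreeAlgebra.ι k)).prod) := by
          rw [htail, Finsupp.sum, Finsupp.sum, Finset.mul_sum, Finset.sum_mul]
          refine Finset.sum_congr rfl fun γ _ => ?_
          rw [stdMon_eq_wordProd]
          simp [List.map_append, List.prod_append, mul_assoc, smul_mul_assoc, mul_smul_comm]
        rw [e2, Finsupp.sum]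
        refine Submodule.sum_mem _ fun γ hγ => Submodule.smul_mem _ _ ?_
        have h0 := hp a b hab γ hγ
        have h1 := ltOf_add_right hle (expw u + expw v) h0
        have egoal : expw (u ++ sortedWord γ ++ v) = γ + (expw u + expw v) := by
          rw [expw_append, expw_append, expw_sortedWord]; abel
        have edelta : δ = (Pi.single a 1 + Pi.single b 1) + (expw u + expw v) := by
          rw [← hw, expw_append, expw_cons, expw_cons]; abel
        refine IHo (expw (u ++ sortedWord γ ++ v)) ?_ _ rfl
        rw [egoal, edelta]
        exact h1
      · -- the ideal term
        refine Submodule.mem_sup_right ?_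
        rw [Submodule.restrictScalars_mem, TwoSidedIdeal.mem_asIdeal]
        refine TwoSidedIdeal.mul_mem_left _ _ _ (TwoSidedIdeal.mul_mem_right _ _ _ ?_)
        exact TwoSidedIdeal.subset_span ⟨a, b, hab, rfl⟩

theorem mem_Msub {q : Fin N → Fin N → k} {p : Fin N → Fin N → ((Fin N → ℕ) →₀ k)}
    {le : (Fin N → ℕ) → (Fin N → ℕ) → Prop}
    (hle : IsAdmissible le)
    (hp : ∀ i j : Fin N, i < j → ∀ γ ∈ (p i j).support,
      ltOf le γ (Pi.single i 1 + Pi.single j 1))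
    (a0 : FreeAlgebra k (Fin N)) : a0 ∈ Msub q p := by
  have hword := fun w => wordProd_mem (q := q) (p := p) hle hp w
  have hspanmul : ∀ s ∈ Submodule.span k (Set.range (stdMon (FreeAlgebra.ι k (X := Fin N)))),
      ∀ t ∈ Submodule.span k (Set.range (stdMon (FreeAlgebra.ι k (X := Fin N)))),
      s * t ∈ Msub q p := by
    intro s hs
    induction hs using Submodule.span_induction with
    | mem s hsmem =>
      intro t ht
      induction ht using Submodule.span_induction with
      | mem t htmem =>
        obtain ⟨γ, rfl⟩ := hsmem
        obtain ⟨δ, rfl⟩ := htmem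
        rw [stdMon_eq_wordProd, stdMon_eq_wordProd, ← List.prod_append, ← List.map_append]
        exact hword _
      | zero => rw [mul_zero]; exact Submodule.zero_mem _
      | add t1 t2 h1 h2 ih1 ih2 => rw [mul_add]; exact Submodule.add_mem _ ih1 ih2
      | smul c t1 h1 ih1 => rw [mul_smul_comm]; exact Submodule.smul_mem _ _ ih1
    | zero => intro t ht; rw [zero_mul]; exact Submodule.zero_mem _
    | add s1 s2 h1 h2 ih1 ih2 =>
      intro t ht
      rw [add_mul]; exact Submodule.add_mem _ (ih1 t ht) (ih2 t ht)
    | smul c s1 h1 ih1 =>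
      intro t ht
      rw [smul_mul_assoc]; exact Submodule.smul_mem _ _ (ih1 t ht)
  induction a0 using FreeAlgebra.induction with
  | grade0 r =>
    rw [Algebra.algebraMap_eq_smul_one]
    refine Submodule.smul_mem _ _ ?_
    have := hword []
    simpa using this
  | grade1 i =>
    have := hword [i]
    simpa using this
  | add a b ha hb => exact Submodule.add_mem _ ha hb
  | mul a b ha hb =>
    obtain ⟨sa, hsa, ta, hta, rfl⟩ := Submodule.mem_sup.mp ha
    obtain ⟨sb, hsb, tb, htb, rfl⟩ := Submodule.mem_sup.mp hb
    have hexp : (sa + ta) * (sb + tb) = sa * sb + (sa * tb + ta * (sb + tb)) := by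
      rw [add_mul, mul_add]; abel
    rw [hexp]
    refine Submodule.add_mem _ (hspanmul sa hsa sb hsb) (Submodule.add_mem _ ?_ ?_)
    · refine Submodule.mem_sup_right ?_
      rw [Submodule.restrictScalars_mem, TwoSidedIdeal.mem_asIdeal] at htb ⊢
      exact TwoSidedIdeal.mul_mem_left _ _ _ htb
    · refine Submodule.mem_sup_right ?_
      rw [Submodule.restrictScalars_mem, TwoSidedIdeal.mem_asIdeal] at hta ⊢
      exact TwoSidedIdeal.mul_mem_right _ _ _ hta

theorem lift_eq_zero_iff {T : Type*} [Ring T] [Algebra k T] (z : Fin N → T)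
    {q : Fin N → Fin N → k} {p : Fin N → Fin N → ((Fin N → ℕ) →₀ k)}
    {le : (Fin N → ℕ) → (Fin N → ℕ) → Prop}
    (hle : IsAdmissible le)
    (hp : ∀ i j : Fin N, i < j → ∀ γ ∈ (p i j).support,
      ltOf le γ (Pi.single i 1 + Pi.single j 1))
    (hz : ∀ i j : Fin N, i < j → FreeAlgebra.lift k z (quantumRel k q p i j) = 0)
    (hli : LinearIndependent k (stdMon z)) (a : FreeAlgebra k (Fin N)) :
    FreeAlgebra.lift k z a = 0 ↔ a ∈ TwoSidedIdeal.span (relSet q p) := by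
  have hback : ∀ x ∈ TwoSidedIdeal.span (relSet q p), FreeAlgebra.lift k z x = 0 := by
    intro x hx
    have hsub : relSet q p ⊆ (TwoSidedIdeal.ker ((FreeAlgebra.lift k z) : FreeAlgebra k (Fin N) →ₐ[k] T).toRingHom : Set (FreeAlgebra k (Fin N))) := by
      rintro y ⟨i, j, hij, rfl⟩
      simp only [Set.mem_setOf_eq, SetLike.mem_coe]
      rw [TwoSidedIdeal.mem_ker]
      exact hz i j hij
    have := TwoSidedIdeal.mem_span_iff.mp hx _ hsub
    rwa [TwoSidedIdeal.mem_ker] at this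
  refine ⟨fun h0 => ?_, fun h => hback a h⟩
  obtain ⟨s, hs, t, ht, rfl⟩ := Submodule.mem_sup.mp (mem_Msub hle hp a)
  rw [Submodule.restrictScalars_mem, TwoSidedIdeal.mem_asIdeal] at ht
  have hlt : FreeAlgebra.lift k z t = 0 := hback t ht
  have hls : FreeAlgebra.lift k z s = 0 := by
    rw [map_add, hlt, add_zero] at h0; exact h0
  obtain ⟨c, rfl⟩ := Finsupp.mem_span_range_iff_exists_finsupp.mp hs
  have hcs : FreeAlgebra.lift k z (c.sum fun γ r => r • stdMon (FreeAlgebra.ι k) γ) =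
      Finsupp.linearCombination k (stdMon z) c := by
    rw [map_finsuppSum, Finsupp.linearCombination_apply]
    refine Finsupp.sum_congr fun γ _ => ?_
    rw [map_smul, stdMon_monoidHom_map]
    simp [FreeAlgebra.lift_ι_apply]
  rw [hcs] at hls
  have hc0 : c = 0 := linearIndependent_iff.mp hli c hls
  subst hc0
  simpa using ht

end Generic

section Split
variable {m n : ℕ}

theorem splitL_append (a : Fin m → ℕ) (b : Fin n → ℕ) : splitL (Fin.append a b) = a :=
  funext fun i => Fin.append_left a b i

theorem splitR_append (a : Fin m → ℕ) (b : Fin n → ℕ) : splitR (Fin.append a b) = b :=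
  funext fun j => Fin.append_right a b j

theorem append_split (α : Fin (m + n) → ℕ) : Fin.append (splitL α) (splitR α) = α := by
  funext l
  refine Fin.addCases (fun j => ?_) (fun j => ?_) l
  · rw [Fin.append_left]; rfl
  · rw [Fin.append_right]; rfl

theorem split_inj {α β : Fin (m + n) → ℕ} (hL : splitL α = splitL β)
    (hR : splitR α = splitR β) : α = β := by
  rw [← append_split α, ← append_split β, hL, hR]

theorem splitL_add (α β : Fin (m + n) → ℕ) : splitL (α + β) = splitL α + splitL β := rfl
theorem splitR_add (α β : Fin (m + n) → ℕ) : splitR (α + β) = splitR α + splitR β := rfl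
theorem splitL_zero : splitL (0 : Fin (m + n) → ℕ) = 0 := rfl
theorem splitR_zero : splitR (0 : Fin (m + n) → ℕ) = 0 := rfl

theorem append_add (a b : Fin m → ℕ) (c d : Fin n → ℕ) :
    Fin.append a c + Fin.append b d = Fin.append (a + b) (c + d) := by
  funext l
  refine Fin.addCases (fun j => ?_) (fun j => ?_) l <;>
    simp [Fin.append_left, Fin.append_right]

theorem single_castAdd (i : Fin m) :
    (Pi.single (Fin.castAdd n i) 1 : Fin (m + n) → ℕ) = Fin.append (Pi.single i 1) 0 := by
  funext l
  refine Fin.addCases (fun j => ?_) (fun j => ?_) l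
  · rw [Fin.append_left]
    simp [Pi.single_apply, Fin.castAdd_inj]
  · rw [Fin.append_right]
    have hne : (Fin.natAdd m j) ≠ (Fin.castAdd n i) := by
      intro e
      have := congrArg Fin.val e
      simp at this
      omega
    simp [Pi.single_apply, hne]

theorem single_natAdd (j : Fin n) :
    (Pi.single (Fin.natAdd m j) 1 : Fin (m + n) → ℕ) = Fin.append (0 : Fin m → ℕ) (Pi.single j 1) := by
  funext l
  refine Fin.addCases (fun i => ?_) (fun i => ?_) l
  · rw [Fin.append_left]
    have hne : (Fin.castAdd n i) ≠ (Fin.natAdd m j) := by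
      intro e
      have := congrArg Fin.val e
      simp at this
      omega
    simp [Pi.single_apply, hne]
  · rw [Fin.append_right]
    have : (Fin.natAdd m i) = (Fin.natAdd m j) ↔ i = j := by
      constructor
      · intro e; have := congrArg Fin.val e; simp at this; exact Fin.ext this
      · rintro rfl; rfl
    simp [Pi.single_apply, this]

variable {leR : (Fin m → ℕ) → (Fin m → ℕ) → Prop} {leS : (Fin n → ℕ) → (Fin n → ℕ) → Prop}

theorem elimOrdL_admissible (hR : IsAdmissible leR) (hS : IsAdmissible leS) :
    IsAdmissible (elimOrdL leR leS) := by
  refine ⟨?_, ?_, ?_, ?_, ?_⟩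
  · intro a b
    by_cases hL : splitL a = splitL b
    · by_cases hRr : splitR a = splitR b
      · exact Or.inl (Or.inl (split_inj hL hRr))
      · rcases hS.1 (splitR a) (splitR b) with h | h
        · exact Or.inl (Or.inr (Or.inr ⟨hL, h, hRr⟩))
        · exact Or.inr (Or.inr (Or.inr ⟨hL.symm, h, Ne.symm hRr⟩))
    · rcases hR.1 (splitL a) (splitL b) with h | h
      · exact Or.inl (Or.inr (Or.inl ⟨h, hL⟩))
      · exact Or.inr (Or.inr (Or.inl ⟨h, Ne.symm hL⟩))
  · rintro a b (rfl | hab | hab) h2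
    · rfl
    · rcases h2 with rfl | hba | hba
      · rfl
      · exact absurd (hR.2.1 _ _ hab.1 hba.1) hab.2
      · exact absurd hba.1.symm hab.2
    · rcases h2 with rfl | hba | hba
      · rfl
      · exact absurd hab.1.symm hba.2
      · exact absurd (hS.2.1 _ _ hab.2.1 hba.2.1) hab.2.2
  · rintro a b c (rfl | hab | hab) h2
    · exact h2
    · rcases h2 with rfl | hbc | hbc
      · exact Or.inr (Or.inl hab)
      · exact Or.inr (Or.inl (ltOf_trans hR hab hbc))
      · exact Or.inr (Or.inl (hbc.1 ▸ hab))
    · rcases h2 with rfl | hbc | hbc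
      · exact Or.inr (Or.inr hab)
      · exact Or.inr (Or.inl (hab.1 ▸ hbc))
      · exact Or.inr (Or.inr ⟨hab.1.trans hbc.1, ltOf_trans hS hab.2 hbc.2⟩)
  · intro a
    by_cases hL : splitL a = 0
    · by_cases hRr : splitR a = 0
      · exact Or.inl (split_inj (splitL_zero.trans hL.symm) (splitR_zero.trans hRr.symm))
      · exact Or.inr (Or.inr ⟨splitL_zero.trans hL.symm, hS.2.2.2.1 _, Ne.symm hRr⟩)
    · exact Or.inr (Or.inl ⟨hR.2.2.2.1 _, Ne.symm hL⟩)
  · rintro a b c (rfl | hab | hab)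
    · exact Or.inl rfl
    · exact Or.inr (Or.inl (by rw [splitL_add, splitL_add]; exact ltOf_add_right hR _ hab))
    · refine Or.inr (Or.inr ⟨by rw [splitL_add, splitL_add, hab.1], ?_⟩)
      rw [splitR_add, splitR_add]
      exact ltOf_add_right hS _ hab.2

theorem elimOrdR_admissible (hR : IsAdmissible leR) (hS : IsAdmissible leS) :
    IsAdmissible (elimOrdR leR leS) := by
  refine ⟨?_, ?_, ?_, ?_, ?_⟩
  · intro a b
    by_cases hRr : splitR a = splitR b
    · by_cases hL : splitL a = splitL b
      · exact Or.inl (Or.inl (split_inj hL hRr))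
      · rcases hR.1 (splitL a) (splitL b) with h | h
        · exact Or.inl (Or.inr (Or.inr ⟨hRr, h, hL⟩))
        · exact Or.inr (Or.inr (Or.inr ⟨hRr.symm, h, Ne.symm hL⟩))
    · rcases hS.1 (splitR a) (splitR b) with h | h
      · exact Or.inl (Or.inr (Or.inl ⟨h, hRr⟩))
      · exact Or.inr (Or.inr (Or.inl ⟨h, Ne.symm hRr⟩))
  · rintro a b (rfl | hab | hab) h2
    · rfl
    · rcases h2 with rfl | hba | hba
      · rfl
      · exact absurd (hS.2.1 _ _ hab.1 hba.1) hab.2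
      · exact absurd hba.1.symm hab.2
    · rcases h2 with rfl | hba | hba
      · rfl
      · exact absurd hab.1.symm hba.2
      · exact absurd (hR.2.1 _ _ hab.2.1 hba.2.1) hab.2.2
  · rintro a b c (rfl | hab | hab) h2
    · exact h2
    · rcases h2 with rfl | hbc | hbc
      · exact Or.inr (Or.inl hab)
      · exact Or.inr (Or.inl (ltOf_trans hS hab hbc))
      · exact Or.inr (Or.inl (hbc.1 ▸ hab))
    · rcases h2 with rfl | hbc | hbc
      · exact Or.inr (Or.inr hab)
      · exact Or.inr (Or.inl (hab.1 ▸ hbc))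
      · exact Or.inr (Or.inr ⟨hab.1.trans hbc.1, ltOf_trans hR hab.2 hbc.2⟩)
  · intro a
    by_cases hRr : splitR a = 0
    · by_cases hL : splitL a = 0
      · exact Or.inl (split_inj (splitL_zero.trans hL.symm) (splitR_zero.trans hRr.symm))
      · exact Or.inr (Or.inr ⟨splitR_zero.trans hRr.symm, hR.2.2.2.1 _, Ne.symm hL⟩)
    · exact Or.inr (Or.inl ⟨hS.2.2.2.1 _, Ne.symm hRr⟩)
  · rintro a b c (rfl | hab | hab)
    · exact Or.inl rfl
    · exact Or.inr (Or.inl (by rw [splitR_add, splitR_add]; exact ltOf_add_right hS _ hab))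
    · refine Or.inr (Or.inr ⟨by rw [splitR_add, splitR_add, hab.1], ?_⟩)
      rw [splitL_add, splitL_add]
      exact ltOf_add_right hR _ hab.2

theorem ltOf_elim_left (hR : IsAdmissible leR) {a b : Fin m → ℕ} (h : ltOf leR a b)
    {le : (Fin (m + n) → ℕ) → (Fin (m + n) → ℕ) → Prop}
    (hle : le = elimOrdL leR leS ∨ le = elimOrdR leR leS) :
    ltOf le (Fin.append a (0 : Fin n → ℕ)) (Fin.append b 0) := by
  have hne : Fin.append a (0 : Fin n → ℕ) ≠ Fin.append b 0 := fun e => h.2 (by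
    have := congrArg splitL e
    rwa [splitL_append, splitL_append] at this)
  rcases hle with rfl | rfl
  · exact ⟨Or.inr (Or.inl (by rw [splitL_append, splitL_append]; exact h)), hne⟩
  · refine ⟨Or.inr (Or.inr ⟨by rw [splitR_append, splitR_append], ?_⟩), hne⟩
    rw [splitL_append, splitL_append]; exact h

theorem ltOf_elim_right (hS : IsAdmissible leS) {a b : Fin n → ℕ} (h : ltOf leS a b)
    {le : (Fin (m + n) → ℕ) → (Fin (m + n) → ℕ) → Prop}
    (hle : le = elimOrdL leR leS ∨ le = elimOrdR leR leS) :
    ltOf le (Fin.append (0 : Fin m → ℕ) a) (Fin.append 0 b) := by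
  have hne : Fin.append (0 : Fin m → ℕ) a ≠ Fin.append 0 b := fun e => h.2 (by
    have := congrArg splitR e
    rwa [splitR_append, splitR_append] at this)
  rcases hle with rfl | rfl
  · refine ⟨Or.inr (Or.inr ⟨by rw [splitL_append, splitL_append], ?_⟩), hne⟩
    rw [splitR_append, splitR_append]; exact h
  · exact ⟨Or.inr (Or.inl (by rw [splitR_append, splitR_append]; exact h)), hne⟩

end Split

theorem stdMon_zero {N : ℕ} {A : Type*} [Monoid A] (x : Fin N → A) : stdMon x 0 = 1 := by
  unfold stdMon
  apply List.prod_eq_one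
  intro a ha
  simp only [List.mem_map] at ha
  obtain ⟨i, _, rfl⟩ := ha
  simp

theorem lift_quantumRel {k : Type*} [Field k] {N : ℕ} {T : Type*} [Ring T] [Algebra k T]
    (z : Fin N → T) (q : Fin N → Fin N → k) (p : Fin N → Fin N → ((Fin N → ℕ) →₀ k))
    (i j : Fin N) :
    FreeAlgebra.lift k z (quantumRel k q p i j) =
      z j * z i - q i j • (z i * z j) - (p i j).sum fun γ c => c • stdMon z γ := by
  rw [quantumRel, map_sub, map_sub, map_mul, map_smul, map_mul, map_finsuppSum]
  simp only [FreeAlgebra.lift_ι_apply]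
  congr 1
  refine Finsupp.sum_congr fun γ _ => ?_
  rw [map_smul, stdMon_monoidHom_map]
  simp only [FreeAlgebra.lift_ι_apply]

section Tensor
open TensorProduct

variable {k : Type*} [Field k] {R S : Type*} [Ring R] [Algebra k R] [Ring S] [Algebra k S]
  {m n : ℕ}

theorem stdMon_append {A : Type*} [Monoid A] (X : Fin m → A) (Y : Fin n → A)
    (α : Fin m → ℕ) (β : Fin n → ℕ) :
    stdMon (Fin.append X Y) (Fin.append α β) = stdMon X α * stdMon Y β := by
  unfold stdMon
  rw [← List.ofFn_eq_map, ← List.ofFn_eq_map, ← List.ofFn_eq_map, List.ofFn_add,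
    List.prod_append]
  have hL : (fun i => Fin.append X Y (Fin.castAdd n i) ^ Fin.append α β (Fin.castAdd n i)) =
      (fun i => X i ^ α i) := funext fun i => by rw [Fin.append_left, Fin.append_left]
  have hRr : (fun j => Fin.append X Y (Fin.natAdd m j) ^ Fin.append α β (Fin.natAdd m j)) =
      (fun j => Y j ^ β j) := funext fun j => by rw [Fin.append_right, Fin.append_right]
  exact congrArg₂ (fun a b => (List.ofFn a).prod * (List.ofFn b).prod) hL hRr

theorem stdMon_tensor (x : Fin m → R) (y : Fin n → S) (α : Fin m → ℕ) (β : Fin n → ℕ) :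
    stdMon (Fin.append (fun i => x i ⊗ₜ[k] (1 : S)) (fun j => (1 : R) ⊗ₜ[k] y j))
        (Fin.append α β) = stdMon x α ⊗ₜ[k] stdMon y β := by
  rw [stdMon_append]
  have h1 : stdMon (fun i => x i ⊗ₜ[k] (1 : S)) α = stdMon x α ⊗ₜ[k] (1 : S) := by
    have := stdMon_monoidHom_map
      (Algebra.TensorProduct.includeLeftRingHom (R := k) (A := R) (B := S)) x α
    simp only [Algebra.TensorProduct.includeLeftRingHom_apply] at this
    exact this.symm
  have h2 : stdMon (fun j => (1 : R) ⊗ₜ[k] y j) β = (1 : R) ⊗ₜ[k] stdMon y β := by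
    have := stdMon_monoidHom_map
      ((Algebra.TensorProduct.includeRight : S →ₐ[k] R ⊗[k] S)) y β
    simp only [Algebra.TensorProduct.includeRight_apply] at this
    exact this.symm
  rw [h1, h2, Algebra.TensorProduct.tmul_mul_tmul, mul_one, one_mul]

end Tensor

end TensorPBWAux

open TensorPBWAux

/-- If `R = k{x₁,…,x_m; Q_R, ⪯_R}` and `S = k{y₁,…,yₙ; Q_S, ⪯_S}` are
PBW algebras, then `R ⊗[k] S` is the PBW algebra on the generators
`x₁⊗1,…,x_m⊗1, 1⊗y₁,…,1⊗yₙ` with the quantum relations `Q` described in the paper, bounded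
by either of the two elimination orders `⪯` on `ℕ^{m+n}` arising from `⪯_R` and `⪯_S`;
moreover the standard monomial of exponent `(α,β)` is `x^α ⊗ y^β`. -/
theorem tensorProduct_isPBW
    (x : Fin m → R) (qR : Fin m → Fin m → k) (pR : Fin m → Fin m → ((Fin m → ℕ) →₀ k))
    (leR : (Fin m → ℕ) → (Fin m → ℕ) → Prop) (hR : IsPBW k R x qR pR leR)
    (y : Fin n → S) (qS : Fin n → Fin n → k) (pS : Fin n → Fin n → ((Fin n → ℕ) →₀ k))
    (leS : (Fin n → ℕ) → (Fin n → ℕ) → Prop) (hS : IsPBW k S y qS pS leS)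
    (le : (Fin (m + n) → ℕ) → (Fin (m + n) → ℕ) → Prop)
    (hle : le = elimOrdL leR leS ∨ le = elimOrdR leR leS) :
    IsPBW k (R ⊗[k] S)
      (Fin.append (fun i => x i ⊗ₜ[k] (1 : S)) (fun j => (1 : R) ⊗ₜ[k] y j))
      (qTens qR qS) (pTens pR pS) le ∧
    ∀ (α : Fin m → ℕ) (β : Fin n → ℕ),
      stdMon (Fin.append (fun i => x i ⊗ₜ[k] (1 : S)) (fun j => (1 : R) ⊗ₜ[k] y j))
          (Fin.append α β) =
        stdMon x α ⊗ₜ[k] stdMon y β := by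
  obtain ⟨hadmR, hqR, hpR, hsurjR, hkerR, hliR, hspR⟩ := hR
  obtain ⟨hadmS, hqS, hpS, hsurjS, hkerS, hliS, hspS⟩ := hS
  set z : Fin (m + n) → R ⊗[k] S :=
    Fin.append (fun i => x i ⊗ₜ[k] (1 : S)) (fun j => (1 : R) ⊗ₜ[k] y j) with hzdef
  -- the standard monomials in the tensor product
  have hstd : ∀ (α : Fin m → ℕ) (β : Fin n → ℕ),
      stdMon z (Fin.append α β) = stdMon x α ⊗ₜ[k] stdMon y β := fun α β =>
    stdMon_tensor x y α β
  -- basis of the tensor product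
  let bR : Module.Basis (Fin m → ℕ) k R := Module.Basis.mk hliR (le_of_eq hspR.symm)
  let bS : Module.Basis (Fin n → ℕ) k S := Module.Basis.mk hliS (le_of_eq hspS.symm)
  let e : (Fin (m + n) → ℕ) ≃ ((Fin m → ℕ) × (Fin n → ℕ)) :=
    { toFun := fun γ => (splitL γ, splitR γ)
      invFun := fun p => Fin.append p.1 p.2
      left_inv := fun γ => append_split γ
      right_inv := fun p => Prod.ext (splitL_append p.1 p.2) (splitR_append p.1 p.2) }
  let bT : Module.Basis (Fin (m + n) → ℕ) k (R ⊗[k] S) := (bR.tensorProduct bS).reindex e.symm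
  have hbT : ⇑bT = stdMon z := by
    funext γ
    show (bR.tensorProduct bS).reindex e.symm γ = stdMon z γ
    rw [Module.Basis.reindex_apply, Equiv.symm_symm]
    have he : e γ = (splitL γ, splitR γ) := rfl
    rw [he, Module.Basis.tensorProduct_apply, Module.Basis.mk_apply, Module.Basis.mk_apply,
      ← hstd, append_split]
  have hli : LinearIndependent k (stdMon z) := hbT ▸ bT.linearIndependent
  have hsp : Submodule.span k (Set.range (stdMon z)) = ⊤ := by
    rw [← hbT]; exact bT.span_eq
  -- admissibility
  have hadm : IsAdmissible le := by
    rcases hle with rfl | rfl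
    exacts [elimOrdL_admissible hadmR hadmS, elimOrdR_admissible hadmR hadmS]
  -- the scalars are nonzero
  have hq : ∀ i j : Fin (m + n), i < j → qTens qR qS i j ≠ 0 := by
    intro i j hij
    have hij' : (i : ℕ) < (j : ℕ) := hij
    unfold qTens
    by_cases hi : (i : ℕ) < m
    · by_cases hj : (j : ℕ) < m
      · rw [dif_pos hi, dif_pos hj]
        exact hqR _ _ (Fin.mk_lt_mk.mpr hij')
      · rw [dif_pos hi, dif_neg hj]; exact one_ne_zero
    · have hj : ¬ (j : ℕ) < m := fun hjm => hi (lt_trans hij' hjm)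
      rw [dif_neg hi, dif_neg hj]
      exact hqS _ _ (Fin.mk_lt_mk.mpr (by omega))
  -- the tails are bounded
  have hinjL : Function.Injective (fun α : Fin m → ℕ => Fin.append α (0 : Fin n → ℕ)) := by
    intro a b hab
    have := congrArg splitL hab
    rwa [splitL_append, splitL_append] at this
  have hinjR : Function.Injective (fun β : Fin n → ℕ => Fin.append (0 : Fin m → ℕ) β) := by
    intro a b hab
    have := congrArg splitR hab
    rwa [splitR_append, splitR_append] at this
  have hp : ∀ i j : Fin (m + n), i < j → ∀ γ ∈ (pTens pR pS i j).support,
      ltOf le γ (Pi.single i 1 + Pi.single j 1) := by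
    intro i j hij γ hγ
    have hij' : (i : ℕ) < (j : ℕ) := hij
    unfold pTens at hγ
    by_cases hi : (i : ℕ) < m
    · by_cases hj : (j : ℕ) < m
      · obtain ⟨i0, rfl⟩ : ∃ i0 : Fin m, i = Fin.castAdd n i0 := ⟨⟨i, hi⟩, Fin.ext rfl⟩
        obtain ⟨j0, rfl⟩ : ∃ j0 : Fin m, j = Fin.castAdd n j0 := ⟨⟨j, hj⟩, Fin.ext rfl⟩
        rw [dif_pos hi, dif_pos hj] at hγ
        simp only [Fin.coe_castAdd, Fin.eta] at hγ
        rw [Finsupp.mapDomain_support_of_injective hinjL] at hγ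
        obtain ⟨δ, hδ, rfl⟩ := Finset.mem_image.mp hγ
        have hb := hpR i0 j0 (Fin.lt_def.mpr (by simpa using hij')) δ hδ
        rw [single_castAdd, single_castAdd, append_add, add_zero]
        exact ltOf_elim_left hadmR hb hle
      · rw [dif_pos hi, dif_neg hj] at hγ
        simp at hγ
    · have hj : ¬ (j : ℕ) < m := fun hjm => hi (lt_trans hij' hjm)
      obtain ⟨i0, rfl⟩ : ∃ i0 : Fin n, i = Fin.natAdd m i0 :=
        ⟨⟨(i : ℕ) - m, by have := i.isLt; omega⟩, Fin.ext (by simp; omega)⟩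
      obtain ⟨j0, rfl⟩ : ∃ j0 : Fin n, j = Fin.natAdd m j0 :=
        ⟨⟨(j : ℕ) - m, by have := j.isLt; omega⟩, Fin.ext (by simp; omega)⟩
      rw [dif_neg hi, dif_neg hj] at hγ
      simp only [Fin.coe_natAdd, Nat.add_sub_cancel_left, Fin.eta] at hγ
      rw [Finsupp.mapDomain_support_of_injective hinjR] at hγ
      obtain ⟨δ, hδ, rfl⟩ := Finset.mem_image.mp hγ
      have hb := hpS i0 j0 (Fin.lt_def.mpr (by
        simp only [Fin.coe_natAdd] at hij'
        omega)) δ hδ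
      rw [single_natAdd, single_natAdd, append_add, add_zero]
      exact ltOf_elim_right hadmS hb hle
  -- values of the generators
  have hzL : ∀ i' : Fin m, z (Fin.castAdd n i') = x i' ⊗ₜ[k] (1 : S) := fun i' =>
    Fin.append_left _ _ i'
  have hzR : ∀ j' : Fin n, z (Fin.natAdd m j') = (1 : R) ⊗ₜ[k] y j' := fun j' =>
    Fin.append_right _ _ j'
  -- the relations vanish in the tensor product
  have hz0 : ∀ i j : Fin (m + n), i < j →
      FreeAlgebra.lift k z (quantumRel k (qTens qR qS) (pTens pR pS) i j) = 0 := by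
    intro i j hij
    have hij' : (i : ℕ) < (j : ℕ) := hij
    rw [lift_quantumRel]
    by_cases hi : (i : ℕ) < m
    · obtain ⟨i0, rfl⟩ : ∃ i0 : Fin m, i = Fin.castAdd n i0 := ⟨⟨i, hi⟩, Fin.ext rfl⟩
      by_cases hj : (j : ℕ) < m
      · obtain ⟨j0, rfl⟩ : ∃ j0 : Fin m, j = Fin.castAdd n j0 := ⟨⟨j, hj⟩, Fin.ext rfl⟩
        have hlt : i0 < j0 := Fin.lt_def.mpr (by simpa using hij')
        have hqq : qTens qR qS (Fin.castAdd n i0) (Fin.castAdd n j0) = qR i0 j0 := by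
          unfold qTens
          rw [dif_pos hi, dif_pos hj]
          simp only [Fin.coe_castAdd, Fin.eta]
        have hpp : pTens pR pS (Fin.castAdd n i0) (Fin.castAdd n j0) =
            Finsupp.mapDomain (fun α : Fin m → ℕ => Fin.append α 0) (pR i0 j0) := by
          unfold pTens
          rw [dif_pos hi, dif_pos hj]
          simp only [Fin.coe_castAdd, Fin.eta]
        rw [hzL, hzL, hqq, hpp]
        rw [Finsupp.sum_mapDomain_index (h := fun γ c => c • stdMon z γ)
          (fun b => zero_smul k (stdMon z b)) (fun b c1 c2 => add_smul c1 c2 (stdMon z b))]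
        have hsum : ((pR i0 j0).sum fun δ c => c • stdMon z (Fin.append δ 0)) =
            (pR i0 j0).sum fun δ c => c • (stdMon x δ ⊗ₜ[k] (1 : S)) :=
          Finsupp.sum_congr fun δ _ => by rw [hstd, stdMon_zero]
        rw [hsum]
        have h0 : FreeAlgebra.lift k x (quantumRel k qR pR i0 j0) = 0 :=
          (hkerR _).mpr (TwoSidedIdeal.subset_span ⟨i0, j0, hlt, rfl⟩)
        rw [lift_quantumRel] at h0
        have hmap := congrArg (Algebra.TensorProduct.includeLeft : R →ₐ[k] R ⊗[k] S) h0
        rw [map_zero, map_sub, map_sub, map_mul, map_smul, map_mul, map_finsuppSum] at hmap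
        simp only [Algebra.TensorProduct.includeLeft_apply, map_smul] at hmap
        exact hmap
      · obtain ⟨j0, rfl⟩ : ∃ j0 : Fin n, j = Fin.natAdd m j0 :=
          ⟨⟨(j : ℕ) - m, by have := j.isLt; omega⟩, Fin.ext (by simp; omega)⟩
        have hqq : qTens qR qS (Fin.castAdd n i0) (Fin.natAdd m j0) = 1 := by
          unfold qTens; rw [dif_pos hi, dif_neg hj]
        have hpp : pTens pR pS (Fin.castAdd n i0) (Fin.natAdd m j0) = 0 := by
          unfold pTens; rw [dif_pos hi, dif_neg hj]
        rw [hzL, hzR, hqq, hpp, Finsupp.sum_zero_index, one_smul,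
          Algebra.TensorProduct.tmul_mul_tmul, Algebra.TensorProduct.tmul_mul_tmul]
        simp
    · have hj : ¬ (j : ℕ) < m := fun hjm => hi (lt_trans hij' hjm)
      obtain ⟨i0, rfl⟩ : ∃ i0 : Fin n, i = Fin.natAdd m i0 :=
        ⟨⟨(i : ℕ) - m, by have := i.isLt; omega⟩, Fin.ext (by simp; omega)⟩
      obtain ⟨j0, rfl⟩ : ∃ j0 : Fin n, j = Fin.natAdd m j0 :=
        ⟨⟨(j : ℕ) - m, by have := j.isLt; omega⟩, Fin.ext (by simp; omega)⟩
      have hlt : i0 < j0 := Fin.lt_def.mpr (by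
        simp only [Fin.coe_natAdd] at hij'
        omega)
      have hqq : qTens qR qS (Fin.natAdd m i0) (Fin.natAdd m j0) = qS i0 j0 := by
        unfold qTens
        rw [dif_neg hi, dif_neg hj]
        simp only [Fin.coe_natAdd, Nat.add_sub_cancel_left, Fin.eta]
      have hpp : pTens pR pS (Fin.natAdd m i0) (Fin.natAdd m j0) =
          Finsupp.mapDomain (fun β : Fin n → ℕ => Fin.append (0 : Fin m → ℕ) β) (pS i0 j0) := by
        unfold pTens
        rw [dif_neg hi, dif_neg hj]
        simp only [Fin.coe_natAdd, Nat.add_sub_cancel_left, Fin.eta]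
      rw [hzR, hzR, hqq, hpp]
      rw [Finsupp.sum_mapDomain_index (h := fun γ c => c • stdMon z γ)
        (fun b => zero_smul k (stdMon z b)) (fun b c1 c2 => add_smul c1 c2 (stdMon z b))]
      have hsum : ((pS i0 j0).sum fun δ c => c • stdMon z (Fin.append 0 δ)) =
          (pS i0 j0).sum fun δ c => c • ((1 : R) ⊗ₜ[k] stdMon y δ) :=
        Finsupp.sum_congr fun δ _ => by rw [hstd, stdMon_zero]
      rw [hsum]
      have h0 : FreeAlgebra.lift k y (quantumRel k qS pS i0 j0) = 0 :=
        (hkerS _).mpr (TwoSidedIdeal.subset_span ⟨i0, j0, hlt, rfl⟩)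
      rw [lift_quantumRel] at h0
      have hmap := congrArg (Algebra.TensorProduct.includeRight : S →ₐ[k] R ⊗[k] S) h0
      rw [map_zero, map_sub, map_sub, map_mul, map_smul, map_mul, map_finsuppSum] at hmap
      simp only [Algebra.TensorProduct.includeRight_apply, map_smul] at hmap
      exact hmap
  -- surjectivity
  have hsurj : Function.Surjective (FreeAlgebra.lift k z) := by
    intro t
    have hmem : t ∈ Submodule.span k (Set.range (stdMon z)) := by rw [hsp]; trivial
    induction hmem using Submodule.span_induction with
    | mem u hu =>
      obtain ⟨γ, rfl⟩ := hu
      exact ⟨stdMon (FreeAlgebra.ι k) γ, by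
        rw [stdMon_monoidHom_map]; simp [FreeAlgebra.lift_ι_apply]⟩
    | zero => exact ⟨0, map_zero _⟩
    | add u v hu hv ihu ihv =>
      obtain ⟨a, rfl⟩ := ihu; obtain ⟨b, rfl⟩ := ihv; exact ⟨a + b, map_add _ _ _⟩
    | smul c u hu ihu =>
      obtain ⟨a, rfl⟩ := ihu; exact ⟨c • a, map_smul _ _ _⟩
  exact ⟨⟨hadm, hq, hp, hsurj, fun a => lift_eq_zero_iff z hadm hp hz0 hli a, hli, hsp⟩,
    fun α β => hstd α β⟩


end TensorPBW
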